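/- The map from [0, ∞) to C(ℝ, ℂ) with the compact-open topology given by y ↦ (x ↦ cos(2πyx)) is a topological embedding (a homeomorphism onto its range). Consequently, COS(ℝ) equipped with the topology of uniform convergence on compact sets is homeomorphic to [0, ∞). -/

import Mathlib

open Real Topology

/-- The cosine class `COS(G)`: nonzero bounded continuous `φ : G → ℂ` satisfying the
d'Alembert equation `φ(x) φ(y) = (φ(x+y) + φ(x-y))/2`. -/
def CosClass (G : Type*) [AddCommGroup G] [TopologicalSpace G] : Set (G → ℂ) :=
  {φ | Continuous φ ∧ (∃ C, ∀ x, ‖φ x‖ ≤ C) ∧ φ ≠ 0 ∧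
    ∀ x y, φ x * φ y = (φ (x + y) + φ (x - y)) / 2}

/-- The continuous map `x ↦ cos(2πyx)`, viewed as an element of `C(ℝ, ℂ)`. -/
noncomputable def cosCM (y : ℝ) : C(ℝ, ℂ) :=
  ⟨fun x => (Real.cos (2 * π * y * x) : ℂ), by fun_prop⟩

/-!
A continuous solution `φ` of d'Alembert's equation with `φ 0 = 1` satisfies
`2 (∫₀ᵃ φ) φ(x) = ∫_{x-a}^{x+a} φ`. Choosing `a` with `∫₀ᵃ φ ≠ 0`, the right-hand side shows that
`φ` is differentiable with derivative `(φ(x+a) - φ(x-a)) / (2 ∫₀ᵃ φ)`, hence twice differentiable.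
Differentiating the equation twice in `y` at `y = 0` gives `φ'' = φ''(0) φ`; as `φ(0) = 1` and
`φ'(0) = 0` (`φ` is even), uniqueness for this linear ODE gives `φ = cos (ω ·)` with
`ω² = -φ''(0)`, and boundedness forces `ω` to be real because `‖cos z‖ ≥ |sinh (Im z)|`.

The map `y ↦ cos(2πy ·)` is continuous and injective on `[0, ∞)`. It is an embedding because
near `cos(2πy₀ ·)` only frequencies `y ≤ 2y₀ + 1` occur, and a continuous injection of a compact
set into a Hausdorff space is an embedding.
-/

open Filter Set

theorem isEmbedding_of_forall_exists_preimage_nhds_subset_isCompact {X Y : Type*}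
    [TopologicalSpace X] [TopologicalSpace Y] [T2Space Y] {f : X → Y} (hf : Continuous f)
    (hinj : Function.Injective f) (h : ∀ x, ∃ K, IsCompact K ∧ ∃ V ∈ 𝓝 (f x), f ⁻¹' V ⊆ K) :
    IsEmbedding f := by
  refine ⟨isInducing_iff_nhds.2 fun x => le_antisymm (hf.tendsto x).le_comap ?_, hinj⟩
  obtain ⟨K, hK, V, hV, hVK⟩ := h x
  have hxK : x ∈ K := hVK (mem_of_mem_nhds hV : f x ∈ V)
  have : CompactSpace K := isCompact_iff_compactSpace.mp hK
  have hKemb : IsEmbedding (f ∘ Subtype.val : K → Y) :=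
    ((hf.comp continuous_subtype_val).isClosedEmbedding
      (hinj.comp Subtype.val_injective)).isEmbedding
  calc comap f (𝓝 (f x)) = comap f (𝓝 (f x)) ⊓ 𝓟 K :=
        (inf_eq_left.2 (le_principal_iff.2 (mem_comap.2 ⟨V, hV, hVK⟩))).symm
    _ = map Subtype.val (𝓝 (⟨x, hxK⟩ : K)) := by
        rw [hKemb.isInducing.nhds_eq_comap, ← comap_comap, map_comap, Subtype.range_val]; rfl
    _ ≤ 𝓝 x := continuous_subtype_val.tendsto _

theorem ODE_solution_unique_univ_second_order {E : Type*} [NormedAddCommGroup E]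
    [NormedSpace ℝ E] (A : E →L[ℝ] E) {f f' g g' : ℝ → E}
    (hf : ∀ t, HasDerivAt f (f' t) t) (hf' : ∀ t, HasDerivAt f' (A (f t)) t)
    (hg : ∀ t, HasDerivAt g (g' t) t) (hg' : ∀ t, HasDerivAt g' (A (g t)) t)
    (h₀ : f 0 = g 0) (h₀' : f' 0 = g' 0) : f = g := by
  let L : E × E →L[ℝ] E × E :=
    (ContinuousLinearMap.snd ℝ E E).prod (A.comp (ContinuousLinearMap.fst ℝ E E))
  have h := ODE_solution_unique_univ (v := fun _ => L) (s := fun _ => univ) (t₀ := 0)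
    (f := fun t => (f t, f' t)) (g := fun t => (g t, g' t))
    (fun _ => L.lipschitz.lipschitzOnWith) (fun t => ⟨(hf t).prodMk (hf' t), trivial⟩)
    (fun t => ⟨(hg t).prodMk (hg' t), trivial⟩) (Prod.ext h₀ h₀')
  exact funext fun t => congrArg Prod.fst (congrFun h t)

theorem exists_intervalIntegral_ne_zero {E : Type*} [NormedAddCommGroup E] [NormedSpace ℝ E]
    [CompleteSpace E] {f : ℝ → E} (hf : Continuous f) {b : ℝ} (hb : f b ≠ 0) :
    ∃ a, ∫ t in b..a, f t ≠ 0 :=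
  ((hf.integral_hasStrictDerivAt b b).hasDerivAt.eventually_ne hb).exists

theorem hasDerivAt_of_mul_eq_intervalIntegral {f : ℝ → ℂ} (hf : Continuous f) {k : ℂ} {a : ℝ}
    (hk : k ≠ 0) (h : ∀ x, k * f x = ∫ t in (x - a)..(x + a), f t) (x : ℝ) :
    HasDerivAt f ((f (x + a) - f (x - a)) / k) x := by
  have hF : ∀ y, HasDerivAt (fun x => ∫ t in (0 : ℝ)..x, f t) (f y) y := fun y =>
    (hf.integral_hasStrictDerivAt 0 y).hasDerivAt
  refine (((hF (x + a)).comp_add_const x a).sub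
    ((hF (x - a)).comp_sub_const x a)).div_const k |>.congr_of_eventuallyEq
    (Eventually.of_forall fun y => ?_)
  simp only [Pi.sub_apply]
  rw [intervalIntegral.integral_interval_sub_left (hf.intervalIntegrable _ _)
    (hf.intervalIntegrable _ _), ← h, mul_div_cancel_left₀ _ hk]

theorem deriv_zero_of_even {E : Type*} [NormedAddCommGroup E] [NormedSpace ℝ E] {f : ℝ → E}
    (h : ∀ x, f (-x) = f x) : deriv f 0 = 0 := by
  have h' := deriv_comp_neg f 0
  simp only [h, neg_zero] at h'
  simpa [eq_neg_iff_add_eq_zero, ← two_smul ℝ] using h'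

theorem hasDerivAt_complex_cos_mul (ω : ℂ) (x : ℝ) :
    HasDerivAt (fun x : ℝ => Complex.cos (ω * x)) (-ω * Complex.sin (ω * x)) x := by
  simpa [mul_comm] using (((hasDerivAt_id (x : ℂ)).const_mul ω).ccos).comp_ofReal

theorem hasDerivAt_neg_mul_complex_sin_mul (ω : ℂ) (x : ℝ) :
    HasDerivAt (fun x : ℝ => -ω * Complex.sin (ω * x)) (-ω ^ 2 * Complex.cos (ω * x)) x := by
  refine ((((hasDerivAt_id (x : ℂ)).const_mul ω).csin).comp_ofReal.const_mul (-ω)).congr_deriv ?_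
  simp only [id, mul_one]
  ring

theorem Complex.abs_sinh_im_le_norm_cos (z : ℂ) : |Real.sinh z.im| ≤ ‖Complex.cos z‖ := by
  have h : Complex.cos z = ↑(Real.cos z.re * Real.cosh z.im)
      + ↑(-(Real.sin z.re * Real.sinh z.im)) * Complex.I := by
    conv_lhs => rw [← Complex.re_add_im z]
    rw [Complex.cos_add_mul_I]
    push_cast
    ring
  rw [h, Complex.norm_add_mul_I, Real.le_sqrt (abs_nonneg _) (by positivity), sq_abs]
  nlinarith [Real.cosh_sq z.im, Real.sin_sq_add_cos_sq z.re, sq_nonneg (Real.cos z.re)]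

theorem Complex.im_eq_zero_of_forall_norm_cos_mul_le {ω : ℂ} {C : ℝ}
    (h : ∀ x : ℝ, ‖Complex.cos (ω * x)‖ ≤ C) : ω.im = 0 := by
  by_contra hω
  have him : (ω * ((|C| + 1) / ω.im : ℝ)).im = |C| + 1 := by
    rw [Complex.mul_im, Complex.ofReal_re, Complex.ofReal_im, mul_zero, zero_add]
    field_simp
  have hsinh := (Complex.abs_sinh_im_le_norm_cos _).trans (h ((|C| + 1) / ω.im))
  rw [him] at hsinh
  linarith [Real.self_le_sinh_iff.2 (by positivity : 0 ≤ |C| + 1),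
    le_abs_self (Real.sinh (|C| + 1)), le_abs_self C]

section DAlembert

theorem dAlembert_map_zero {G : Type*} [AddGroup G] {φ : G → ℂ}
    (hφ : ∀ x y, φ x * φ y = (φ (x + y) + φ (x - y)) / 2) (h0 : φ ≠ 0) : φ 0 = 1 := by
  obtain ⟨x, hx⟩ := Function.ne_iff.1 h0
  have h := hφ x 0
  rw [add_zero, sub_zero, add_self_div_two] at h
  exact (mul_eq_left₀ hx).1 h

theorem dAlembert_map_neg {G : Type*} [AddGroup G] {φ : G → ℂ}
    (hφ : ∀ x y, φ x * φ y = (φ (x + y) + φ (x - y)) / 2) (h1 : φ 0 = 1) (x : G) :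
    φ (-x) = φ x := by
  have h := hφ 0 x
  rw [h1, one_mul, zero_add, zero_sub] at h
  linear_combination -2 * h

variable {φ : ℝ → ℂ} (hφ : ∀ x y, φ x * φ y = (φ (x + y) + φ (x - y)) / 2)
include hφ

theorem dAlembert_mul_intervalIntegral (hc : Continuous φ) (a x : ℝ) :
    2 * (∫ t in (0 : ℝ)..a, φ t) * φ x = ∫ t in (x - a)..(x + a), φ t := by
  have hadd : ∫ t in (0 : ℝ)..a, φ (x + t) = ∫ t in x..(x + a), φ t := by
    simp [intervalIntegral.integral_comp_add_left φ x]
  have hsub : ∫ t in (0 : ℝ)..a, φ (x - t) = ∫ t in (x - a)..x, φ t := by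
    simp [intervalIntegral.integral_comp_sub_left φ x]
  calc 2 * (∫ t in (0 : ℝ)..a, φ t) * φ x = ∫ t in (0 : ℝ)..a, (φ (x + t) + φ (x - t)) := by
        rw [mul_assoc, ← intervalIntegral.integral_mul_const,
          ← intervalIntegral.integral_const_mul]
        congr 1 with t
        rw [mul_comm (φ t), hφ]
        ring
    _ = ∫ t in (x - a)..(x + a), φ t := by
        rw [intervalIntegral.integral_add (f := fun t => φ (x + t)) (g := fun t => φ (x - t))
          ((hc.comp (continuous_const_add x)).intervalIntegrable _ _)
          ((hc.comp (continuous_sub_left x)).intervalIntegrable _ _), hadd, hsub, add_comm,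
          intervalIntegral.integral_add_adjacent_intervals (hc.intervalIntegrable _ _)
            (hc.intervalIntegrable _ _)]

theorem dAlembert_differentiable (hc : Continuous φ) (h1 : φ 0 = 1) :
    Differentiable ℝ φ ∧ Differentiable ℝ (deriv φ) := by
  obtain ⟨a, ha⟩ := exists_intervalIntegral_ne_zero hc (b := 0) (by simp [h1])
  have hk : 2 * ∫ t in (0 : ℝ)..a, φ t ≠ 0 := mul_ne_zero two_ne_zero ha
  have hd := hasDerivAt_of_mul_eq_intervalIntegral hc hk (dAlembert_mul_intervalIntegral hφ hc a)
  have hdiff : Differentiable ℝ φ := fun x => (hd x).differentiableAt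
  refine ⟨hdiff, ?_⟩
  rw [show deriv φ = _ from funext fun x => (hd x).deriv]
  fun_prop

theorem dAlembert_deriv_deriv (hd : Differentiable ℝ φ) (hd' : Differentiable ℝ (deriv φ))
    (x : ℝ) : deriv (deriv φ) x = deriv (deriv φ) 0 * φ x := by
  have h1 : ∀ y, φ x * deriv φ y = (deriv φ (x + y) - deriv φ (x - y)) / 2 := by
    intro y
    have h := congrArg (deriv · y) (funext (hφ x))
    simp only [deriv_const_mul_field', deriv_div_const] at h
    rw [h, deriv_fun_add (by fun_prop) (by fun_prop), deriv_comp_const_add, deriv_comp_const_sub]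
    ring
  have h2 := congrArg (deriv · 0) (funext h1)
  simp only [deriv_const_mul_field', deriv_div_const] at h2
  rw [deriv_fun_sub (by fun_prop) (by fun_prop), deriv_comp_const_add, deriv_comp_const_sub,
    add_zero, sub_zero] at h2
  linear_combination -h2

theorem dAlembert_exists_eq_complex_cos (hc : Continuous φ) (h1 : φ 0 = 1) :
    ∃ ω : ℂ, ∀ x : ℝ, φ x = Complex.cos (ω * x) := by
  obtain ⟨hd, hd'⟩ := dAlembert_differentiable hφ hc h1
  obtain ⟨ω, hω⟩ : ∃ ω : ℂ, ω ^ 2 = -deriv (deriv φ) 0 :=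
    IsAlgClosed.exists_pow_nat_eq _ two_pos
  have hode := ODE_solution_unique_univ_second_order (ContinuousLinearMap.mul ℝ ℂ (-ω ^ 2))
    (f' := deriv φ) (g' := fun x => -ω * Complex.sin (ω * x))
    (fun x => (hd x).hasDerivAt)
    (fun x => by
      simpa [hω, dAlembert_deriv_deriv hφ hd hd' x] using (hd' x).hasDerivAt)
    (hasDerivAt_complex_cos_mul ω) (hasDerivAt_neg_mul_complex_sin_mul ω)
    (by simp [h1]) (by simp [deriv_zero_of_even (dAlembert_map_neg hφ h1)])
  exact ⟨ω, congrFun hode⟩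

end DAlembert

@[simp]
theorem cosCM_apply (y x : ℝ) : cosCM y x = Real.cos (2 * π * y * x) := rfl

theorem continuous_cosCM : Continuous cosCM :=
  (ContinuousMap.curry
    ⟨fun p : ℝ × ℝ => (Real.cos (2 * π * p.1 * p.2) : ℂ), by fun_prop⟩).continuous

theorem cosCM_mem_cosClass (y : ℝ) : ⇑(cosCM y) ∈ CosClass ℝ := by
  refine ⟨(cosCM y).continuous, ⟨1, fun x => ?_⟩, fun h => ?_, fun x₁ x₂ => ?_⟩
  · rw [cosCM_apply, Complex.norm_real, Real.norm_eq_abs]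
    exact Real.abs_cos_le_one _
  · simpa using congrFun h 0
  · simp only [cosCM_apply, mul_add, mul_sub, Real.cos_add, Real.cos_sub]
    push_cast
    ring

theorem exists_eq_cosCM_of_mem_cosClass {φ : ℝ → ℂ} (hφ : φ ∈ CosClass ℝ) :
    ∃ y, 0 ≤ y ∧ φ = cosCM y := by
  obtain ⟨hc, ⟨C, hC⟩, h0, hfe⟩ := hφ
  obtain ⟨ω, hω⟩ := dAlembert_exists_eq_complex_cos hfe hc (dAlembert_map_zero hfe h0)
  obtain ⟨r, rfl⟩ : ∃ r : ℝ, (r : ℂ) = ω :=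
    ⟨ω.re, Complex.ext rfl (Complex.im_eq_zero_of_forall_norm_cos_mul_le fun x => hω x ▸ hC x).symm⟩
  refine ⟨|r| / (2 * π), by positivity, funext fun x => ?_⟩
  rw [hω x, cosCM_apply, show 2 * π * (|r| / (2 * π)) * x = |r| * x by field_simp,
    ← Complex.ofReal_mul, ← Complex.ofReal_cos]
  rcases abs_choice r with h | h <;> rw [h]
  rw [neg_mul, Real.cos_neg]

theorem range_cosCM_nonneg :
    range (fun y : {y : ℝ // 0 ≤ y} => cosCM y) = {φ : C(ℝ, ℂ) | ⇑φ ∈ CosClass ℝ} := by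
  ext φ
  constructor
  · rintro ⟨y, rfl⟩
    exact cosCM_mem_cosClass y
  · intro hφ
    obtain ⟨y, hy, h⟩ := exists_eq_cosCM_of_mem_cosClass hφ
    exact ⟨⟨y, hy⟩, DFunLike.coe_injective h.symm⟩

theorem dist_cosCM_apply_one_div_two_mul (u : ℝ) {v : ℝ} (hv : v ≠ 0) :
    dist (cosCM u (1 / (2 * v))) (cosCM v (1 / (2 * v))) = 1 + Real.cos (π * (u / v)) := by
  have hu : 2 * π * u * (1 / (2 * v)) = π * (u / v) := by field_simp
  have hv : 2 * π * v * (1 / (2 * v)) = π := by field_simp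
  rw [cosCM_apply, cosCM_apply, hu, hv, Real.cos_pi, Complex.dist_eq, ← Complex.ofReal_sub,
    Complex.norm_real, Real.norm_eq_abs, abs_of_nonneg] <;>
  linarith [Real.neg_one_le_cos (π * (u / v))]

theorem cosCM_injOn : InjOn cosCM (Ici 0) := by
  suffices ∀ u v, 0 ≤ u → u < v → cosCM u ≠ cosCM v by
    intro u hu v hv h
    by_contra hne
    rcases lt_or_gt_of_ne hne with huv | hvu
    exacts [this u v hu huv h, this v u hv hvu h.symm]
  intro u v hu huv h
  have hv : 0 < v := hu.trans_lt huv
  have hgap := dist_cosCM_apply_one_div_two_mul u hv.ne'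
  have hlt : Real.cos π < Real.cos (π * (u / v)) :=
    Real.cos_lt_cos_of_nonneg_of_le_pi (by positivity) le_rfl
      (mul_lt_of_lt_one_right Real.pi_pos ((div_lt_one hv).2 huv))
  rw [h, dist_self] at hgap
  rw [Real.cos_pi] at hlt
  linarith

/-- For `y > 2 y₀ + 1`, the functions `cosCM y` and `cosCM y₀` are at distance `≥ 1` at the point
`1 / (2 y) ∈ [0, 1]`. -/
theorem exists_nhds_cosCM_preimage_subset (y₀ : ℝ) (hy₀ : 0 ≤ y₀) :
    ∃ V ∈ 𝓝 (cosCM y₀), ∀ y, 0 ≤ y → cosCM y ∈ V → y ≤ 2 * y₀ + 1 := by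
  let r : C(ℝ, ℂ) → C(Icc (0 : ℝ) 1, ℂ) := ContinuousMap.restrict (Icc 0 1)
  refine ⟨r ⁻¹' Metric.ball (r (cosCM y₀)) 1,
    (ContinuousMap.continuous_restrict _).continuousAt.preimage_mem_nhds
      (Metric.ball_mem_nhds _ one_pos), fun y hy hyV => ?_⟩
  by_contra! hlarge
  have hypos : 0 < y := by linarith
  have hx : 1 / (2 * y) ∈ Icc (0 : ℝ) 1 :=
    ⟨by positivity, by rw [div_le_one (by positivity)]; linarith⟩
  have hcos : 0 ≤ Real.cos (π * (y₀ / y)) := by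
    have hratio : y₀ / y ≤ 1 / 2 := by rw [div_le_iff₀ hypos]; linarith
    refine Real.cos_nonneg_of_mem_Icc ⟨?_, by nlinarith [Real.pi_pos]⟩
    linarith [Real.pi_pos, (by positivity : 0 ≤ π * (y₀ / y))]
  have hdist : dist (cosCM y (1 / (2 * y))) (cosCM y₀ (1 / (2 * y))) < 1 :=
    (ContinuousMap.dist_apply_le_dist (f := r (cosCM y)) (g := r (cosCM y₀)) ⟨_, hx⟩).trans_lt hyV
  rw [dist_comm, dist_cosCM_apply_one_div_two_mul y₀ hypos.ne'] at hdist
  linarith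

theorem isEmbedding_cosCM_nonneg : IsEmbedding fun y : {y : ℝ // 0 ≤ y} => cosCM y := by
  refine isEmbedding_of_forall_exists_preimage_nhds_subset_isCompact
    (continuous_cosCM.comp continuous_subtype_val)
    (fun a b h => Subtype.ext (cosCM_injOn a.2 b.2 h)) fun y₀ => ?_
  obtain ⟨V, hV, hVy⟩ := exists_nhds_cosCM_preimage_subset y₀ y₀.2
  exact ⟨Subtype.val ⁻¹' Icc 0 (2 * y₀ + 1),
    isClosed_Ici.isClosedEmbedding_subtypeVal.isCompact_preimage isCompact_Icc, V, hV,
    fun y hy => ⟨y.2, hVy y y.2 hy⟩⟩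

/-- The map `y ↦ (x ↦ cos(2πyx))` from `[0, ∞)` to `C(ℝ, ℂ)` with the
compact-open topology is a topological embedding with range `COS(ℝ)`; consequently
`COS(ℝ)` with the topology of uniform convergence on compacta is homeomorphic to
`[0, ∞)`. -/
theorem cosClass_real_homeomorph :
    IsEmbedding (fun y : {y : ℝ // 0 ≤ y} => cosCM (y : ℝ)) ∧
    Set.range (fun y : {y : ℝ // 0 ≤ y} => cosCM (y : ℝ))
      = {φ : C(ℝ, ℂ) | ⇑φ ∈ CosClass ℝ} ∧
    Nonempty ({φ : C(ℝ, ℂ) // ⇑φ ∈ CosClass ℝ} ≃ₜ {y : ℝ // 0 ≤ y}) :=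
  ⟨isEmbedding_cosCM_nonneg, range_cosCM_nonneg,
    ⟨(Homeomorph.setCongr range_cosCM_nonneg.symm).trans
      isEmbedding_cosCM_nonneg.toHomeomorph.symm⟩⟩
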